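/- arXiv:1506.07288 — 5 statements merged into one kernel-verified Lean document; each statement's English description precedes it below -/
import Mathlib

section
/- If a statistical model P = {P_θ} on (Ω, ℬ) is dominated by a pivotal probability measure λ and a statistic T : Ω → Ω_T satisfies the factorization dP_θ/dλ(x) = g_θ(T(x)) λ-a.e. for measurable functions g_θ on Ω_T, then g_θ equals the Radon–Nikodym derivative dP_θ^T/dλ^T almost everywhere with respect to λ^T, i.e. dP_θ/dλ(x) = (dP_θ^T/dλ^T)(T(x)) λ-a.e., where P_θ^T and λ^T denote the pushforward measures under T. -/
open MeasureTheory
open scoped ENNReal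

/-- If a statistical model `P θ` on `Ω` is dominated by a pivotal
probability measure `lam` and a statistic `T : Ω → ΩT` satisfies the factorization
`dPθ/dlam (x) = g θ (T x)` `lam`-a.e., then `dPθ/dlam (x) = (dPθᵀ/dlamᵀ) (T x)` `lam`-a.e.,
where the superscript `T` denotes pushforward under `T`. -/
theorem stmt0 {Ω ΩT Θ : Type*} [MeasurableSpace Ω] [MeasurableSpace ΩT]
    (P : Θ → Measure Ω) (lam : Measure Ω)
    [IsProbabilityMeasure lam] [∀ θ, IsProbabilityMeasure (P θ)]
    (habs : ∀ θ, P θ ≪ lam)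
    (T : Ω → ΩT) (hT : Measurable T)
    (g : Θ → ΩT → ℝ≥0∞) (hg : ∀ θ, Measurable (g θ))
    (hfac : ∀ θ, (fun x => (P θ).rnDeriv lam x) =ᵐ[lam] fun x => g θ (T x)) :
    (∀ θ, (fun t => g θ t) =ᵐ[lam.map T] fun t => ((P θ).map T).rnDeriv (lam.map T) t) ∧
    (∀ θ, (fun x => (P θ).rnDeriv lam x)
        =ᵐ[lam] fun x => ((P θ).map T).rnDeriv (lam.map T) (T x)) := by
  have key : ∀ θ, (P θ).map T = (lam.map T).withDensity (g θ) := by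
    intro θ
    have hP : P θ = lam.withDensity (fun x => g θ (T x)) := by
      rw [← withDensity_congr_ae (hfac θ)]
      exact (Measure.withDensity_rnDeriv_eq _ _ (habs θ)).symm
    ext s hs
    rw [hP, Measure.map_apply hT hs, withDensity_apply _ (hT hs),
      withDensity_apply _ hs, ← setLIntegral_map hs (hg θ) hT]
  have h1 : ∀ θ, (fun t => g θ t) =ᵐ[lam.map T]
      fun t => ((P θ).map T).rnDeriv (lam.map T) t := by
    intro θ
    have : SigmaFinite (lam.map T) := by
      have : IsProbabilityMeasure (lam.map T) := Measure.isProbabilityMeasure_map hT.aemeasurable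
      infer_instance
    have := Measure.rnDeriv_withDensity (lam.map T) (hg θ)
    rw [key θ]
    exact this.symm
  refine ⟨h1, fun θ => ?_⟩
  have h2 : (fun t => g θ t) ∘ T =ᵐ[lam]
      (fun t => ((P θ).map T).rnDeriv (lam.map T) t) ∘ T :=
    (MeasureTheory.ae_eq_comp hT.aemeasurable (h1 θ))
  exact (hfac θ).trans h2
end

section
/- If {ρ_i}_{i≥1} is a dense sequence in the set of states on a separable Hilbert space H (with respect to the trace norm) and ρ_* = ∑_i c_i ρ_i with c_i > 0, ∑ c_i = 1, then for every POVM A on (Ω, ℬ), every state ρ satisfies P^A_ρ ≪ P^A_{ρ_*}; that is, P^A_{ρ_*} dominates the entire statistical model {P^A_ρ : ρ a state}. -/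
open MeasureTheory
open scoped InnerProductSpace ENNReal

/-- A positive-operator valued measure on outcome space `Ω` over the Hilbert space `H`.
σ-additivity in the weak operator topology is encoded by the family of scalar measures
`E ↦ ⟪x, A(E) x⟫` attached to each vector `x`. -/
structure POVM (Ω : Type*) [MeasurableSpace Ω] (H : Type*) [NormedAddCommGroup H]
    [InnerProductSpace ℂ H] [CompleteSpace H] where
  toFun : Set Ω → H →L[ℂ] H
  pos : ∀ E, MeasurableSet E → (toFun E).IsPositive
  map_univ : toFun Set.univ = 1
  measure : H → MeasureTheory.Measure Ω
  measure_apply : ∀ (x : H) (E : Set Ω), MeasurableSet E →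
    measure x E = ENNReal.ofReal (⟪x, toFun E x⟫_ℂ).re

variable {H : Type*} [NormedAddCommGroup H] [InnerProductSpace ℂ H] [CompleteSpace H]

/-- A state (positive trace-class operator of unit trace), with trace computed
in the Hilbert basis `b` of the separable Hilbert space `H`. -/
structure QState (b : HilbertBasis ℕ ℂ H) where
  op : H →L[ℂ] H
  pos : op.IsPositive
  tr_one : HasSum (fun i => (⟪b i, op (b i)⟫_ℂ).re) 1

/-- The trace of an operator `T`, computed in the Hilbert basis `b`. -/
noncomputable def trOp (b : HilbertBasis ℕ ℂ H) (T : H →L[ℂ] H) : ℝ :=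
  ∑' i, (⟪b i, T (b i)⟫_ℂ).re

/-- The trace-norm distance `‖ρ - σ‖_tr`, via its dual characterization
`sup {|tr((ρ - σ) T)| : ‖T‖ ≤ 1}`. -/
noncomputable def traceDist (b : HilbertBasis ℕ ℂ H) (ρ σ : H →L[ℂ] H) : ℝ :=
  ⨆ T : {T : H →L[ℂ] H // ‖T‖ ≤ 1}, |trOp b ((ρ - σ) ∘L T.1)|


/-!
If `Ps E = 0` then `tr(ρ_* A(E)) = 0`. Since `ρ_* ≥ cₖ ρₖ` and `A(E) ≥ 0`, both `tr(cₖ ρₖ A(E))`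
and `tr((ρ_* - cₖ ρₖ) A(E))` are nonnegative, so `tr(ρₖ A(E)) = 0` for every `k`. As
`‖A(E)‖ ≤ 1`, `|tr(σ A(E))| = |tr((σ - ρₖ) A(E))| ≤ ‖σ - ρₖ‖_tr`, which is arbitrarily small by
density, so `P σ E = 0`. The trace estimates `0 ≤ tr(D T)` for `T ≥ 0` and `|tr(D T)| ≤ tr D ‖T‖`,
for a positive trace-class `D`, come from rewriting `tr(D T) = tr(√D T √D)`.
-/

open scoped ComplexOrder

namespace HilbertBasis

variable {ι κ 𝕜 E : Type*} [RCLike 𝕜] [NormedAddCommGroup E] [InnerProductSpace 𝕜 E]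

theorem hasSum_norm_inner_sq (b : HilbertBasis ι 𝕜 E) (x : E) :
    HasSum (fun i => ‖⟪b i, x⟫_𝕜‖ ^ 2) (‖x‖ ^ 2) := by
  have h := (RCLike.hasSum_re 𝕜 (b.hasSum_inner_mul_inner x x))
  simp only [← inner_conj_symm x (b _), RCLike.conj_mul, inner_self_eq_norm_sq_to_K] at h
  exact_mod_cast h

theorem summable_norm_inner_sq_prod (b : HilbertBasis ι 𝕜 E) {x : κ → E}
    (hx : Summable fun k => ‖x k‖ ^ 2) :
    Summable fun p : κ × ι => ‖⟪b p.2, x p.1⟫_𝕜‖ ^ 2 :=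
  (summable_prod_of_nonneg fun _ => by positivity).mpr
    ⟨fun k => (b.hasSum_norm_inner_sq (x k)).summable,
      hx.congr fun k => (b.hasSum_norm_inner_sq (x k)).tsum_eq.symm⟩

variable [CompleteSpace E]

open ContinuousLinearMap in
/-- Both series are iterated sums of the absolutely summable double series
`⟪B† bₖ, bⱼ⟫ ⟪bⱼ, A bₖ⟫`, which is dominated by `(|⟪bⱼ, B† bₖ⟫|² + |⟪bⱼ, A bₖ⟫|²) / 2`. -/
theorem exists_hasSum_inner_comp_comm (b : HilbertBasis ι 𝕜 E) (A B : E →L[𝕜] E)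
    (hA : Summable fun i => ‖A (b i)‖ ^ 2) (hB : Summable fun i => ‖adjoint B (b i)‖ ^ 2) :
    ∃ S, HasSum (fun i => ⟪b i, A (B (b i))⟫_𝕜) S ∧ HasSum (fun i => ⟪b i, B (A (b i))⟫_𝕜) S := by
  set F : ι × ι → 𝕜 := fun p => ⟪adjoint B (b p.1), b p.2⟫_𝕜 * ⟪b p.2, A (b p.1)⟫_𝕜
  have hF : Summable F := by
    refine .of_norm_bounded (((b.summable_norm_inner_sq_prod hA).add
      (b.summable_norm_inner_sq_prod hB)).div_const 2) fun p => ?_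
    rw [norm_mul, norm_inner_symm]
    nlinarith [two_mul_le_add_sq ‖⟪b p.2, adjoint B (b p.1)⟫_𝕜‖ ‖⟪b p.2, A (b p.1)⟫_𝕜‖]
  obtain ⟨S, hS⟩ := hF
  refine ⟨S, ?_, hS.prod_fiberwise fun k => ?_⟩
  · refine ((Equiv.prodComm ι ι).hasSum_iff.mpr hS).prod_fiberwise fun j => ?_
    have h := b.hasSum_inner_mul_inner (adjoint A (b j)) (B (b j))
    simp only [adjoint_inner_left] at h
    simpa only [F, Function.comp_def, Equiv.prodComm_apply, Prod.swap, adjoint_inner_left,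
      mul_comm] using h
  · have h := b.hasSum_inner_mul_inner (adjoint B (b k)) (A (b k))
    rwa [adjoint_inner_left] at h

end HilbertBasis

open ContinuousLinearMap

section PositiveTraceClass

variable {b : HilbertBasis ℕ ℂ H} {D : H →L[ℂ] H}

theorem norm_sqrt_apply_sq (hD : D.IsPositive) (x : H) :
    ‖CFC.sqrt D x‖ ^ 2 = (⟪x, D x⟫_ℂ).re := by
  have hD' : 0 ≤ D := (nonneg_iff_isPositive D).mpr hD
  have hsa : IsSelfAdjoint (CFC.sqrt D) := IsSelfAdjoint.of_nonneg (CFC.sqrt_nonneg D)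
  have h : ⟪x, D x⟫_ℂ = ⟪CFC.sqrt D x, CFC.sqrt D x⟫_ℂ := by
    conv_lhs => rw [← CFC.sqrt_mul_sqrt_self D hD']
    exact (hsa.isSymmetric _ _).symm
  rw [h, inner_self_eq_norm_sq_to_K]
  norm_cast

theorem exists_hasSum_inner_comp_sqrt (hD : D.IsPositive)
    (hDs : Summable fun i => (⟪b i, D (b i)⟫_ℂ).re) (T : H →L[ℂ] H) :
    ∃ S, HasSum (fun i => ⟪b i, (D ∘L T) (b i)⟫_ℂ) S ∧
      HasSum (fun i => ⟪CFC.sqrt D (b i), T (CFC.sqrt D (b i))⟫_ℂ) S := by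
  set R := CFC.sqrt D
  have hsa : IsSelfAdjoint R := IsSelfAdjoint.of_nonneg (CFC.sqrt_nonneg D)
  have hR : Summable fun i => ‖R (b i)‖ ^ 2 :=
    hDs.congr fun i => (norm_sqrt_apply_sq hD (b i)).symm
  have hRT : Summable fun i => ‖adjoint (R ∘L T) (b i)‖ ^ 2 := by
    refine .of_nonneg_of_le (fun _ => by positivity) (fun i => ?_) (hR.mul_left (‖adjoint T‖ ^ 2))
    rw [adjoint_comp, hsa.adjoint_eq, comp_apply, ← mul_pow]
    gcongr
    exact le_opNorm _ _
  obtain ⟨S, h₁, h₂⟩ := b.exists_hasSum_inner_comp_comm R (R ∘L T) hR hRT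
  refine ⟨S, ?_, ?_⟩
  · rwa [← CFC.sqrt_mul_sqrt_self D ((nonneg_iff_isPositive D).mpr hD)]
  · exact h₂.congr_fun fun i => hsa.isSymmetric _ _

theorem summable_re_inner_comp (hD : D.IsPositive)
    (hDs : Summable fun i => (⟪b i, D (b i)⟫_ℂ).re) (T : H →L[ℂ] H) :
    Summable fun i => (⟪b i, (D ∘L T) (b i)⟫_ℂ).re :=
  have ⟨_, h, _⟩ := exists_hasSum_inner_comp_sqrt hD hDs T
  (Complex.hasSum_re h).summable

theorem trOp_comp_nonneg (hD : D.IsPositive)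
    (hDs : Summable fun i => (⟪b i, D (b i)⟫_ℂ).re) {T : H →L[ℂ] H} (hT : T.IsPositive) :
    0 ≤ trOp b (D ∘L T) := by
  obtain ⟨S, h₁, h₂⟩ := exists_hasSum_inner_comp_sqrt hD hDs T
  rw [trOp, (Complex.hasSum_re h₁).tsum_eq]
  exact (Complex.hasSum_re h₂).nonneg fun i => hT.re_inner_nonneg_right _

theorem abs_trOp_comp_le (hD : D.IsPositive)
    (hDs : Summable fun i => (⟪b i, D (b i)⟫_ℂ).re) (T : H →L[ℂ] H) :
    |trOp b (D ∘L T)| ≤ trOp b D * ‖T‖ := by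
  obtain ⟨S, h₁, h₂⟩ := exists_hasSum_inner_comp_sqrt hD hDs T
  have hbound : HasSum (fun i => ‖CFC.sqrt D (b i)‖ ^ 2 * ‖T‖) (trOp b D * ‖T‖) :=
    (hDs.hasSum.congr_fun fun i => norm_sqrt_apply_sq hD (b i)).mul_right _
  rw [trOp, (Complex.hasSum_re h₁).tsum_eq]
  refine (Complex.abs_re_le_norm S).trans (h₂.norm_le_of_bounded hbound fun i => ?_)
  calc ‖⟪CFC.sqrt D (b i), T (CFC.sqrt D (b i))⟫_ℂ‖
      ≤ ‖CFC.sqrt D (b i)‖ * (‖T‖ * ‖CFC.sqrt D (b i)‖) :=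
        (norm_inner_le_norm _ _).trans (by gcongr; exact T.le_opNorm _)
    _ = ‖CFC.sqrt D (b i)‖ ^ 2 * ‖T‖ := by ring

end PositiveTraceClass

section TraceLinear

variable {E : Type*} [NormedAddCommGroup E] [InnerProductSpace ℂ E] {b : HilbertBasis ℕ ℂ E}
  {X Y : E →L[ℂ] E}

theorem trOp_sub (hX : Summable fun i => (⟪b i, X (b i)⟫_ℂ).re)
    (hY : Summable fun i => (⟪b i, Y (b i)⟫_ℂ).re) :
    trOp b (X - Y) = trOp b X - trOp b Y := by
  simp only [trOp, sub_apply, inner_sub_right, Complex.sub_re]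
  exact hX.tsum_sub hY

theorem re_inner_ofReal_smul_apply (r : ℝ) (x y : E) :
    (⟪x, ((r : ℂ) • X) y⟫_ℂ).re = r * (⟪x, X y⟫_ℂ).re := by
  simp

theorem trOp_ofReal_smul (r : ℝ) (X : E →L[ℂ] E) : trOp b ((r : ℂ) • X) = r * trOp b X := by
  simp only [trOp, re_inner_ofReal_smul_apply, tsum_mul_left]

end TraceLinear

namespace QState

variable {b : HilbertBasis ℕ ℂ H}

theorem abs_trOp_comp_le (σ : QState b) (T : H →L[ℂ] H) : |trOp b (σ.op ∘L T)| ≤ ‖T‖ := by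
  have h := _root_.abs_trOp_comp_le σ.pos σ.tr_one.summable T
  rwa [show trOp b σ.op = 1 from σ.tr_one.tsum_eq, one_mul] at h

theorem trOp_sub_comp (σ τ : QState b) (T : H →L[ℂ] H) :
    trOp b ((σ.op - τ.op) ∘L T) = trOp b (σ.op ∘L T) - trOp b (τ.op ∘L T) := by
  rw [sub_comp]
  exact trOp_sub (summable_re_inner_comp σ.pos σ.tr_one.summable T)
    (summable_re_inner_comp τ.pos τ.tr_one.summable T)

theorem abs_trOp_comp_le_traceDist (σ τ : QState b) {T : H →L[ℂ] H} (hT : ‖T‖ ≤ 1) :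
    |trOp b ((σ.op - τ.op) ∘L T)| ≤ traceDist b σ.op τ.op := by
  refine le_ciSup (f := fun T : {T : H →L[ℂ] H // ‖T‖ ≤ 1} => |trOp b ((σ.op - τ.op) ∘L T.1)|)
    ⟨2, ?_⟩ ⟨T, hT⟩
  rintro _ ⟨⟨T', hT'⟩, rfl⟩
  calc |trOp b ((σ.op - τ.op) ∘L T')|
      ≤ |trOp b (σ.op ∘L T')| + |trOp b (τ.op ∘L T')| := by
        rw [trOp_sub_comp]; exact abs_sub _ _
    _ ≤ 2 := by linarith [σ.abs_trOp_comp_le T', τ.abs_trOp_comp_le T']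

theorem trOp_comp_eq_zero_of_dense {ρ : ℕ → QState b}
    (hdense : ∀ (σ : QState b) (ε : ℝ), 0 < ε → ∃ i, traceDist b σ.op (ρ i).op < ε)
    {T : H →L[ℂ] H} (hT : ‖T‖ ≤ 1) (hρT : ∀ i, trOp b ((ρ i).op ∘L T) = 0) (σ : QState b) :
    trOp b (σ.op ∘L T) = 0 := by
  refine abs_nonpos_iff.mp (le_of_forall_pos_lt_add fun ε hε => ?_)
  obtain ⟨i, hi⟩ := hdense σ ε hε
  calc |trOp b (σ.op ∘L T)| = |trOp b ((σ.op - (ρ i).op) ∘L T)| := by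
        rw [trOp_sub_comp, hρT, sub_zero]
    _ ≤ traceDist b σ.op (ρ i).op := σ.abs_trOp_comp_le_traceDist (ρ i) hT
    _ < 0 + ε := by rwa [zero_add]

end QState

theorem isPositive_sub_smul_of_hasSum {ι E : Type*} [NormedAddCommGroup E] [InnerProductSpace ℂ E]
    {X : ι → E →L[ℂ] E} {c : ι → ℝ} {Y : E →L[ℂ] E}
    (hX : ∀ i, (X i).IsPositive) (hc : ∀ i, 0 ≤ c i)
    (hY : ∀ x, HasSum (fun i => (c i : ℂ) • X i x) (Y x)) (k : ι) :
    (Y - (c k : ℂ) • X k).IsPositive := by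
  refine (isPositive_iff_complex _).mpr fun x => ?_
  have hsum : HasSum (fun i => (c i : ℂ) * ⟪x, X i x⟫_ℂ) ⟪x, Y x⟫_ℂ := by
    simpa [inner_smul_right] using (hY x).mapL (innerSL ℂ x)
  have hle : (c k : ℂ) * ⟪x, X k x⟫_ℂ ≤ ⟪x, Y x⟫_ℂ :=
    le_hasSum hsum k fun i _ =>
      mul_nonneg (Complex.zero_le_real.mpr (hc i)) ((hX i).inner_nonneg_right x)
  have h0 : 0 ≤ ⟪x, (Y - (c k : ℂ) • X k) x⟫_ℂ := by
    simpa [inner_sub_right, inner_smul_right] using hle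
  have hreal := Complex.eq_re_of_ofReal_le (r := 0)
    (z := ⟪x, (Y - (c k : ℂ) • X k) x⟫_ℂ) (by simpa using h0)
  rw [← inner_conj_symm, hreal]
  simpa using (Complex.nonneg_iff.mp h0).1

theorem trOp_comp_eq_zero_of_hasSum {b : HilbertBasis ℕ ℂ H} {ρ : ℕ → QState b} {c : ℕ → ℝ}
    (hc : ∀ i, 0 < c i) {ρs : QState b}
    (hρs : ∀ x : H, HasSum (fun i => (c i : ℂ) • (ρ i).op x) (ρs.op x))
    {T : H →L[ℂ] H} (hT : T.IsPositive) (hρsT : trOp b (ρs.op ∘L T) = 0) (k : ℕ) :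
    trOp b ((ρ k).op ∘L T) = 0 := by
  let D := ρs.op - (c k : ℂ) • (ρ k).op
  have hD : D.IsPositive :=
    isPositive_sub_smul_of_hasSum (fun i => (ρ i).pos) (fun i => (hc i).le) hρs k
  have hDs : Summable fun i => (⟪b i, D (b i)⟫_ℂ).re := by
    refine (ρs.tr_one.summable.sub ((ρ k).tr_one.summable.mul_left (c k))).congr fun i => ?_
    rw [sub_apply, inner_sub_right, Complex.sub_re, re_inner_ofReal_smul_apply]
  have hsplit : trOp b (D ∘L T) = trOp b (ρs.op ∘L T) - c k * trOp b ((ρ k).op ∘L T) := by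
    rw [sub_comp, smul_comp, ← trOp_ofReal_smul]
    refine trOp_sub (summable_re_inner_comp ρs.pos ρs.tr_one.summable T) ?_
    simpa only [re_inner_ofReal_smul_apply] using
      (summable_re_inner_comp (ρ k).pos (ρ k).tr_one.summable T).mul_left (c k)
  have h₁ := trOp_comp_nonneg (ρ k).pos (ρ k).tr_one.summable hT
  have h₂ := trOp_comp_nonneg hD hDs hT
  nlinarith [hc k]

namespace POVM

variable {Ω : Type*} [MeasurableSpace Ω] (A : POVM Ω H) {E : Set Ω}

theorem re_inner_apply_le (hE : MeasurableSet E) (x : H) : (⟪x, A.toFun E x⟫_ℂ).re ≤ ‖x‖ ^ 2 := by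
  have h := measure_mono (μ := A.measure x) (Set.subset_univ E)
  rw [A.measure_apply x E hE, A.measure_apply x _ .univ, A.map_univ, one_apply_eq_self] at h
  rw [← inner_self_eq_norm_sq (𝕜 := ℂ)]
  exact (ENNReal.ofReal_le_ofReal_iff inner_self_nonneg).mp h

theorem norm_apply_le_one (hE : MeasurableSet E) : ‖A.toFun E‖ ≤ 1 := by
  have hA := A.pos E hE
  refine (CStarAlgebra.norm_le_one_iff_of_nonneg _ ((nonneg_iff_isPositive _).mpr hA)).mpr ?_
  refine (le_def _ _).mpr
    (isPositive_def'.mpr ⟨(IsSelfAdjoint.one _).sub hA.isSelfAdjoint, fun x => ?_⟩)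
  have h := A.re_inner_apply_le hE x
  rw [reApplyInnerSelf_apply, sub_apply, one_apply_eq_self, inner_sub_left, map_sub,
    inner_self_eq_norm_sq, inner_re_symm]
  exact sub_nonneg.mpr h

end POVM

theorem stmt4_general {Ω : Type*} [MeasurableSpace Ω] (b : HilbertBasis ℕ ℂ H) (A : POVM Ω H)
    (ρ : ℕ → QState b) (c : ℕ → ℝ) (hc : ∀ i, 0 < c i)
    (hdense : ∀ (σ : QState b) (ε : ℝ), 0 < ε → ∃ i, traceDist b σ.op (ρ i).op < ε)
    (ρs : QState b) (hρs : ∀ x : H, HasSum (fun i => (c i : ℂ) • (ρ i).op x) (ρs.op x))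
    (P : QState b → Measure Ω)
    (hP : ∀ (σ : QState b) E, MeasurableSet E → (P σ E).toReal = trOp b (σ.op ∘L A.toFun E))
    (hPp : ∀ σ, IsProbabilityMeasure (P σ))
    (Ps : Measure Ω)
    (hPs : ∀ E, MeasurableSet E → (Ps E).toReal = trOp b (ρs.op ∘L A.toFun E)) :
    ∀ σ : QState b, P σ ≪ Ps := by
  intro σ
  refine Measure.AbsolutelyContinuous.mk fun E hE hPsE => ?_
  have hρsE : trOp b (ρs.op ∘L A.toFun E) = 0 := by rw [← hPs E hE, hPsE, ENNReal.toReal_zero]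
  have hρE := trOp_comp_eq_zero_of_hasSum hc hρs (A.pos E hE) hρsE
  have hσE := QState.trOp_comp_eq_zero_of_dense hdense (A.norm_apply_le_one hE) hρE σ
  rw [← hP σ E hE, ENNReal.toReal_eq_zero_iff] at hσE
  exact hσE.resolve_right (measure_ne_top _ _)

/-- If `{ρᵢ}` is trace-norm dense in the states and `ρ_* = ∑ᵢ cᵢ ρᵢ`
with `cᵢ > 0`, `∑ cᵢ = 1`, then for every POVM `A` and every state `σ`,
`P^A_σ ≪ P^A_{ρ_*}`. -/
theorem stmt4 {Ω : Type*} [MeasurableSpace Ω] (b : HilbertBasis ℕ ℂ H) (A : POVM Ω H)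
    (ρ : ℕ → QState b) (c : ℕ → ℝ) (hc : ∀ i, 0 < c i) (hc1 : HasSum c 1)
    (hdense : ∀ (σ : QState b) (ε : ℝ), 0 < ε → ∃ i, traceDist b σ.op (ρ i).op < ε)
    (ρs : QState b) (hρs : ∀ x : H, HasSum (fun i => (c i : ℂ) • (ρ i).op x) (ρs.op x))
    (P : QState b → Measure Ω)
    (hP : ∀ (σ : QState b) E, MeasurableSet E → (P σ E).toReal = trOp b (σ.op ∘L A.toFun E))
    (hPp : ∀ σ, IsProbabilityMeasure (P σ))
    (Ps : Measure Ω)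
    (hPs : ∀ E, MeasurableSet E → (Ps E).toReal = trOp b (ρs.op ∘L A.toFun E))
    (hPsp : IsProbabilityMeasure Ps) :
    ∀ σ : QState b, P σ ≪ Ps :=
  stmt4_general b A ρ c hc hdense ρs hρs P hP hPp Ps hPs
end

section
/- Let (Ω₁, ℬ₁) be a measurable space, (Ω₂, ℬ₂, A₂) a POVM, and κ a regular Markov kernel from Ω₂ to Ω₁. Then there exists a unique POVM A₁₂ on the product space (Ω₁ × Ω₂, ℬ₁ ⊗ ℬ₂) such that A₁₂(E₁ × E₂) = ∫_{E₂} κ(E₁ | y) dA₂(y) for all E₁ ∈ ℬ₁, E₂ ∈ ℬ₂. -/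
/-!
For measurable `F ⊆ Ω₁ × Ω₂`, `A₁₂(F)` is forced by its quadratic form
`Q_F(x) = ∫ κ(F_y | y) d⟪x, A₂ x⟫(y)`, the mass of `F` under the measure `⟪x, A₂ x⟫ ⊗ κ`.
Being an integral of the forms `x ↦ re ⟪x, A₂(E) x⟫`, `Q_F` inherits their algebraic identities
and the bound `0 ≤ Q_F(x) ≤ ‖x‖²`; polarizing it gives a bounded sesquilinear form, and the Riesz
representation turns that into a positive operator `A₁₂(F)`. Its scalar measures are
`⟪x, A₂ x⟫ ⊗ κ`, which gives the value on rectangles. Conversely, any POVM with these values on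
rectangles has the same scalar measures, since rectangles form a generating π-system, and a
positive operator on a complex Hilbert space is determined by its quadratic form.
-/

open MeasureTheory
open scoped InnerProductSpace ENNReal

variable {H : Type*} [NormedAddCommGroup H] [InnerProductSpace ℂ H] [CompleteSpace H]

open Complex ComplexConjugate
open scoped NNReal

section QuadForm

variable {E : Type*} [NormedAddCommGroup E] [InnerProductSpace ℂ E]

/-- The identities satisfied by `x ↦ re ⟪x, T x⟫` for an operator `0 ≤ T ≤ C`. The identity `line`
makes the polarization `ℝ`-homogeneous without any continuity argument. -/
structure IsPositiveQuadForm (Q : E → ℝ) (C : ℝ) : Prop where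
  nonneg : ∀ x, 0 ≤ Q x
  le : ∀ x, Q x ≤ C * ‖x‖ ^ 2
  smul : ∀ (c : ℂ) x, Q (c • x) = ‖c‖ ^ 2 * Q x
  add_add : ∀ u v w, Q (u + v + w) + Q u + Q v + Q w = Q (u + v) + Q (v + w) + Q (u + w)
  line : ∀ t : ℝ, 0 ≤ t → ∀ x y,
    Q (x + (t : ℂ) • y) - Q (x - (t : ℂ) • y) = t * (Q (x + y) - Q (x - y))

/-- Normalized so that `polarForm (‖·‖ ^ 2) = ⟪·, ·⟫_ℂ` (`inner_eq_sum_norm_sq_div_four`). -/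
noncomputable def polarForm (Q : E → ℝ) (x y : E) : ℂ :=
  ⟨(Q (x + y) - Q (x - y)) / 4, (Q (x - I • y) - Q (x + I • y)) / 4⟩

lemma polarForm_neg_right (Q : E → ℝ) (x y : E) : polarForm Q x (-y) = -polarForm Q x y := by
  apply Complex.ext <;> simp only [polarForm, neg_re, neg_im, smul_neg, sub_neg_eq_add,
    ← sub_eq_add_neg] <;> ring

lemma polarForm_I_smul_right (Q : E → ℝ) (x y : E) :
    polarForm Q x (I • y) = I * polarForm Q x y := by
  have e : I • I • y = -y := by rw [smul_smul, I_mul_I, neg_one_smul]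
  apply Complex.ext
  · simp only [polarForm, mul_re, I_re, I_im]; ring
  · simp only [polarForm, mul_im, I_re, I_im, e, sub_neg_eq_add, ← sub_eq_add_neg]; ring

namespace IsPositiveQuadForm

variable {Q : E → ℝ} {C : ℝ}

lemma neg (hQ : IsPositiveQuadForm Q C) (x : E) : Q (-x) = Q x := by
  simpa using hQ.smul (-1) x

lemma I_smul (hQ : IsPositiveQuadForm Q C) (x : E) : Q (I • x) = Q x := by
  simpa using hQ.smul I x

lemma polarForm_self (hQ : IsPositiveQuadForm Q C) (x : E) : polarForm Q x x = Q x := by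
  have e : x - I • x = -(I • (x + I • x)) := by rw [smul_add, smul_smul, I_mul_I]; module
  apply Complex.ext
  · have h0 : Q 0 = 0 := by simpa using hQ.smul 0 0
    rw [polarForm, sub_self, h0, ← two_smul ℂ x, hQ.smul]
    norm_num
  · simp only [polarForm, e, hQ.neg, hQ.I_smul, sub_self, zero_div, ofReal_im]

lemma polarForm_swap (hQ : IsPositiveQuadForm Q C) (x y : E) :
    polarForm Q y x = conj (polarForm Q x y) := by
  have e₁ : y - I • x = -(I • (x + I • y)) := by rw [smul_add, smul_smul, I_mul_I]; module
  have e₂ : y + I • x = I • (x - I • y) := by rw [smul_sub, smul_smul, I_mul_I]; module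
  apply Complex.ext
  · rw [polarForm, conj_re, polarForm, add_comm y x, ← neg_sub x y, hQ.neg]
  · rw [polarForm, conj_im, polarForm, e₁, e₂, hQ.neg, hQ.I_smul, hQ.I_smul]
    ring

lemma polarForm_add_right (hQ : IsPositiveQuadForm Q C) (x y₁ y₂ : E) :
    polarForm Q x (y₁ + y₂) = polarForm Q x y₁ + polarForm Q x y₂ := by
  have key : ∀ w₁ w₂ : E, Q (x + (w₁ + w₂)) - Q (x - (w₁ + w₂))
      = (Q (x + w₁) - Q (x - w₁)) + (Q (x + w₂) - Q (x - w₂)) := by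
    intro w₁ w₂
    have hp := hQ.add_add x w₁ w₂
    have hm := hQ.add_add x (-w₁) (-w₂)
    rw [← neg_add, hQ.neg, hQ.neg, hQ.neg] at hm
    simp only [← sub_eq_add_neg, sub_sub, add_assoc] at hp hm
    linarith
  apply Complex.ext
  · simp only [polarForm, add_re, key]; ring
  · simp only [polarForm, add_im, smul_add]
    linarith [key (I • y₁) (I • y₂)]

lemma polarForm_ofReal_smul_right (hQ : IsPositiveQuadForm Q C) (t : ℝ) (x y : E) :
    polarForm Q x ((t : ℂ) • y) = t * polarForm Q x y := by
  wlog ht : 0 ≤ t generalizing t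
  · have e : (t : ℂ) • y = -(((-t : ℝ) : ℂ) • y) := by push_cast; rw [neg_smul, neg_neg]
    rw [e, polarForm_neg_right, this (-t) (by linarith)]
    push_cast; ring
  have e : I • (t : ℂ) • y = (t : ℂ) • I • y := smul_comm _ _ _
  apply Complex.ext
  · simp only [polarForm, mul_re, ofReal_re, ofReal_im, hQ.line t ht]; ring
  · simp only [polarForm, mul_im, ofReal_re, ofReal_im, e]
    linarith [hQ.line t ht x (I • y)]

lemma polarForm_smul_right (hQ : IsPositiveQuadForm Q C) (c : ℂ) (x y : E) :
    polarForm Q x (c • y) = c * polarForm Q x y := by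
  have e : c • y = (c.re : ℂ) • y + (c.im : ℂ) • I • y := by
    rw [smul_smul, ← add_smul, re_add_im]
  rw [e, hQ.polarForm_add_right, hQ.polarForm_ofReal_smul_right, hQ.polarForm_ofReal_smul_right,
    polarForm_I_smul_right]
  linear_combination polarForm Q x y * re_add_im c

lemma polarForm_add_left (hQ : IsPositiveQuadForm Q C) (x₁ x₂ y : E) :
    polarForm Q (x₁ + x₂) y = polarForm Q x₁ y + polarForm Q x₂ y := by
  rw [hQ.polarForm_swap y, hQ.polarForm_add_right, map_add, ← hQ.polarForm_swap,
    ← hQ.polarForm_swap]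

lemma polarForm_smul_left (hQ : IsPositiveQuadForm Q C) (c : ℂ) (x y : E) :
    polarForm Q (c • x) y = conj c * polarForm Q x y := by
  rw [hQ.polarForm_swap y, hQ.polarForm_smul_right, map_mul, ← hQ.polarForm_swap]

lemma norm_polarForm_le_add (hQ : IsPositiveQuadForm Q C) (x y : E) :
    ‖polarForm Q x y‖ ≤ C * (‖x‖ ^ 2 + ‖y‖ ^ 2) := by
  have part : ∀ w : E, ‖w‖ = ‖y‖ →
      |Q (x + w) - Q (x - w)| ≤ 2 * C * (‖x‖ ^ 2 + ‖y‖ ^ 2) := fun w hw => by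
    have par := parallelogram_law_with_norm ℂ x w
    have hC : C * ‖x + w‖ ^ 2 + C * ‖x - w‖ ^ 2 = 2 * C * (‖x‖ ^ 2 + ‖y‖ ^ 2) := by
      rw [← mul_add, par, hw]; ring
    rw [abs_sub_le_iff]
    constructor <;> linarith [hQ.nonneg (x + w), hQ.nonneg (x - w), hQ.le (x + w), hQ.le (x - w)]
  have hIy : ‖I • y‖ = ‖y‖ := by rw [norm_smul, norm_I, one_mul]
  have him := part (I • y) hIy
  rw [abs_sub_comm] at him
  calc ‖polarForm Q x y‖ ≤ |(polarForm Q x y).re| + |(polarForm Q x y).im| :=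
        norm_le_abs_re_add_abs_im _
    _ ≤ C * (‖x‖ ^ 2 + ‖y‖ ^ 2) := by
        simp only [polarForm, abs_div, abs_of_pos (four_pos : (0 : ℝ) < 4)]
        linarith [part y rfl]

lemma norm_polarForm_le (hQ : IsPositiveQuadForm Q C) (x y : E) :
    ‖polarForm Q x y‖ ≤ 2 * C * ‖x‖ * ‖y‖ := by
  rcases eq_or_ne x 0 with rfl | hx
  · simpa using hQ.polarForm_smul_left 0 0 y
  rcases eq_or_ne y 0 with rfl | hy
  · simpa using hQ.polarForm_smul_right 0 x 0
  have rescale : ∀ z : E, z ≠ 0 → (‖z‖ : ℂ) • (‖z‖⁻¹ : ℂ) • z = z := fun z hz => by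
    rw [smul_smul, mul_inv_cancel₀ (by simpa using hz), one_smul]
  have normalize : ∀ z : E, z ≠ 0 → ‖(‖z‖⁻¹ : ℂ) • z‖ = 1 := fun z hz => by
    rw [norm_smul, norm_inv, norm_real, norm_norm, inv_mul_cancel₀ (norm_ne_zero_iff.mpr hz)]
  have hunit := hQ.norm_polarForm_le_add ((‖x‖⁻¹ : ℂ) • x) ((‖y‖⁻¹ : ℂ) • y)
  rw [normalize x hx, normalize y hy] at hunit
  conv_lhs => rw [← rescale x hx, ← rescale y hy, hQ.polarForm_smul_left,
    hQ.polarForm_smul_right, conj_ofReal, norm_mul, norm_mul, norm_real, norm_real, norm_norm,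
    norm_norm]
  have := mul_le_mul_of_nonneg_left hunit (mul_nonneg (norm_nonneg x) (norm_nonneg y))
  linarith

noncomputable def sesqForm (hQ : IsPositiveQuadForm Q C) : E →L⋆[ℂ] E →L[ℂ] ℂ :=
  (LinearMap.mk₂'ₛₗ (starRingEnd ℂ) (RingHom.id ℂ) (polarForm Q) hQ.polarForm_add_left
    hQ.polarForm_smul_left hQ.polarForm_add_right hQ.polarForm_smul_right).mkContinuous₂
    (2 * C) hQ.norm_polarForm_le

noncomputable def toOperator [CompleteSpace E] (hQ : IsPositiveQuadForm Q C) : E →L[ℂ] E :=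
  InnerProductSpace.continuousLinearMapOfBilin hQ.sesqForm

variable [CompleteSpace E]

lemma inner_toOperator_apply (hQ : IsPositiveQuadForm Q C) (x y : E) :
    ⟪hQ.toOperator x, y⟫_ℂ = polarForm Q x y :=
  InnerProductSpace.continuousLinearMapOfBilin_apply _ x y

lemma inner_toOperator_self (hQ : IsPositiveQuadForm Q C) (x : E) :
    ⟪hQ.toOperator x, x⟫_ℂ = Q x := by
  rw [inner_toOperator_apply, polarForm_self hQ]

lemma re_inner_self_toOperator (hQ : IsPositiveQuadForm Q C) (x : E) :
    (⟪x, hQ.toOperator x⟫_ℂ).re = Q x := by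
  rw [← inner_conj_symm, hQ.inner_toOperator_self, conj_re, ofReal_re]

lemma isPositive_toOperator (hQ : IsPositiveQuadForm Q C) : hQ.toOperator.IsPositive := by
  refine (ContinuousLinearMap.isPositive_iff_complex _).mpr fun x => ?_
  simp [hQ.inner_toOperator_self, hQ.nonneg x]

end IsPositiveQuadForm
end QuadForm

lemma MeasureTheory.Measure.ext_of_measureReal {α : Type*} [MeasurableSpace α] {μ ν : Measure α}
    [IsFiniteMeasure μ] [IsFiniteMeasure ν] (h : ∀ s, MeasurableSet s → μ.real s = ν.real s) :
    μ = ν :=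
  Measure.ext fun s hs =>
    (ENNReal.toReal_eq_toReal_iff' (measure_ne_top μ s) (measure_ne_top ν s)).mp (h s hs)

lemma ContinuousLinearMap.IsPositive.eq_of_re_inner_self_eq {V : Type*} [NormedAddCommGroup V]
    [InnerProductSpace ℂ V] {T S : V →L[ℂ] V} (hT : T.IsPositive) (hS : S.IsPositive)
    (h : ∀ x, (⟪x, T x⟫_ℂ).re = (⟪x, S x⟫_ℂ).re) : T = S := by
  refine ContinuousLinearMap.coe_injective <| (ext_inner_map _ _).mp fun x => ?_
  have hreal : ∀ R : V →L[ℂ] V, R.IsPositive → ⟪R x, x⟫_ℂ = (⟪x, R x⟫_ℂ).re := fun R hR => by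
    rw [← ((ContinuousLinearMap.isPositive_iff_complex R).mp hR x).1, RCLike.re_to_complex,
      ← inner_conj_symm, conj_re]
  simpa [hreal T hT, hreal S hS] using h x

namespace POVM

variable {Ω : Type*} [MeasurableSpace Ω] (A : POVM Ω H)

lemma re_inner_nonneg {E : Set Ω} (hE : MeasurableSet E) (x : H) :
    0 ≤ (⟪x, A.toFun E x⟫_ℂ).re := by
  simpa using (A.pos E hE).re_inner_nonneg_right x

lemma measureReal_apply (x : H) {E : Set Ω} (hE : MeasurableSet E) :
    (A.measure x).real E = (⟪x, A.toFun E x⟫_ℂ).re := by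
  rw [measureReal_def, A.measure_apply x E hE, ENNReal.toReal_ofReal (A.re_inner_nonneg hE x)]

lemma measure_univ (x : H) : A.measure x Set.univ = ENNReal.ofReal (‖x‖ ^ 2) := by
  rw [A.measure_apply x _ MeasurableSet.univ, A.map_univ, one_apply_eq_self,
    inner_self_eq_norm_sq_to_K]
  norm_cast

instance (x : H) : IsFiniteMeasure (A.measure x) :=
  ⟨by rw [measure_univ]; exact ENNReal.ofReal_lt_top⟩

lemma measure_smul (c : ℂ) (x : H) : A.measure (c • x) = (‖c‖₊ ^ 2) • A.measure x := by
  refine Measure.ext_of_measureReal fun E hE => ?_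
  rw [measureReal_nnreal_smul_apply, A.measureReal_apply _ hE, A.measureReal_apply _ hE, map_smul,
    inner_smul_left, inner_smul_right, ← mul_assoc, conj_mul', ← ofReal_pow, re_ofReal_mul]
  norm_cast

lemma measure_add_add (u v w : H) :
    A.measure (u + v + w) + A.measure u + A.measure v + A.measure w
      = A.measure (u + v) + A.measure (v + w) + A.measure (u + w) := by
  refine Measure.ext_of_measureReal fun E hE => ?_
  simp only [measureReal_add_apply (measure_ne_top _ _) (measure_ne_top _ _),
    A.measureReal_apply _ hE, map_add, inner_add_left, inner_add_right, add_re]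
  ring

lemma measure_line (t : ℝ≥0) (x y : H) :
    A.measure (x + ((t : ℝ) : ℂ) • y) + t • A.measure (x - y)
      = A.measure (x - ((t : ℝ) : ℂ) • y) + t • A.measure (x + y) := by
  refine Measure.ext_of_measureReal fun E hE => ?_
  simp only [measureReal_add_apply (measure_ne_top _ _) (measure_ne_top _ _),
    measureReal_nnreal_smul_apply, A.measureReal_apply _ hE, map_add, map_sub, map_smul,
    inner_add_left, inner_add_right, inner_sub_left, inner_sub_right, inner_smul_left, inner_smul_right, conj_ofReal, add_re, sub_re, re_ofReal_mul]
  ring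

noncomputable def lintegralForm (f : Ω → ℝ≥0∞) (x : H) : ℝ := (∫⁻ ω, f ω ∂A.measure x).toReal

variable {A} {f : Ω → ℝ≥0∞}

lemma lintegral_le_measure_univ (hf : ∀ ω, f ω ≤ 1) (x : H) :
    ∫⁻ ω, f ω ∂A.measure x ≤ A.measure x Set.univ :=
  calc ∫⁻ ω, f ω ∂A.measure x ≤ ∫⁻ _, 1 ∂A.measure x := lintegral_mono hf
    _ = A.measure x Set.univ := lintegral_one

lemma lintegral_ne_top (hf : ∀ ω, f ω ≤ 1) (x : H) : ∫⁻ ω, f ω ∂A.measure x ≠ ∞ :=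
  ne_top_of_le_ne_top (measure_ne_top _ _) (lintegral_le_measure_univ hf x)

theorem isPositiveQuadForm_lintegralForm (hf : ∀ ω, f ω ≤ 1) :
    IsPositiveQuadForm (A.lintegralForm f) 1 where
  nonneg _ := ENNReal.toReal_nonneg
  le x := by
    rw [one_mul, lintegralForm, ← ENNReal.toReal_ofReal (sq_nonneg ‖x‖), ← A.measure_univ]
    exact ENNReal.toReal_mono (measure_ne_top _ _) (lintegral_le_measure_univ hf x)
  smul c x := by
    simp only [lintegralForm, measure_smul, lintegral_smul_measure, ENNReal.toReal_smul,
      NNReal.smul_def, smul_eq_mul, NNReal.coe_pow, coe_nnnorm]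
  add_add u v w := by
    have h := congrArg (fun μ => (∫⁻ ω, f ω ∂μ).toReal) (A.measure_add_add u v w)
    simpa [lintegralForm, lintegral_add_measure, ENNReal.toReal_add, lintegral_ne_top hf] using h
  line t ht x y := by
    lift t to ℝ≥0 using ht
    have h := congrArg (fun μ => (∫⁻ ω, f ω ∂μ).toReal) (A.measure_line t x y)
    simp only [lintegralForm, lintegral_add_measure, lintegral_smul_measure, ENNReal.toReal_add,
      ENNReal.toReal_smul, ENNReal.nnreal_smul_ne_top, lintegral_ne_top hf, coe_smul, ne_eq,
      not_false_eq_true, NNReal.smul_def, smul_eq_mul] at h ⊢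
    linarith

theorem toFun_eq_of_isPiSystem {S : Set (Set Ω)} (hgen : ‹MeasurableSpace Ω› = .generateFrom S)
    (hS : IsPiSystem S) {A B : POVM Ω H}
    (h : ∀ s ∈ S, ∀ x, (⟪x, A.toFun s x⟫_ℂ).re = (⟪x, B.toFun s x⟫_ℂ).re)
    {F : Set Ω} (hF : MeasurableSet F) : A.toFun F = B.toFun F := by
  have hmeasure : ∀ x, A.measure x = B.measure x := fun x =>
    ext_of_generate_finite S hgen hS
      (fun s hs => by
        have hs' : MeasurableSet s := hgen ▸ MeasurableSpace.measurableSet_generateFrom hs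
        rw [A.measure_apply x s hs', B.measure_apply x s hs', h s hs x])
      (by rw [A.measure_univ, B.measure_univ])
  refine (A.pos F hF).eq_of_re_inner_self_eq (B.pos F hF) fun x => ?_
  rw [← A.measureReal_apply x hF, hmeasure, B.measureReal_apply x hF]

section CompProd

open ProbabilityTheory

variable {Ω₁ Ω₂ : Type*} [MeasurableSpace Ω₁] [MeasurableSpace Ω₂]

noncomputable def compProd (A : POVM Ω₂ H) (κ : Kernel Ω₂ Ω₁) [IsMarkovKernel κ] :
    POVM (Ω₁ × Ω₂) H where
  toFun F := (A.isPositiveQuadForm_lintegralForm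
    (f := fun y => κ y {a | (a, y) ∈ F}) fun _ => prob_le_one).toOperator
  pos _ _ := IsPositiveQuadForm.isPositive_toOperator _
  map_univ := by
    refine (IsPositiveQuadForm.isPositive_toOperator _).eq_of_re_inner_self_eq
      ContinuousLinearMap.isPositive_one fun x => ?_
    rw [IsPositiveQuadForm.re_inner_self_toOperator, one_apply_eq_self, lintegralForm]
    simpa [A.measure_univ] using (inner_self_eq_norm_sq (𝕜 := ℂ) x).symm
  measure x := (A.measure x ⊗ₘ κ).map Prod.swap
  measure_apply x F hF := by
    rw [IsPositiveQuadForm.re_inner_self_toOperator, lintegralForm,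
      ENNReal.ofReal_toReal (lintegral_ne_top (fun _ => prob_le_one) x),
      Measure.map_apply measurable_swap hF, Measure.compProd_apply (measurable_swap hF)]
    rfl

lemma re_inner_compProd_prod (A : POVM Ω₂ H) (κ : Kernel Ω₂ Ω₁) [IsMarkovKernel κ]
    {E₁ : Set Ω₁} {E₂ : Set Ω₂} (h₁ : MeasurableSet E₁) (h₂ : MeasurableSet E₂) (x : H) :
    (⟪x, (A.compProd κ).toFun (E₁ ×ˢ E₂) x⟫_ℂ).re = ∫ y in E₂, (κ y E₁).toReal ∂A.measure x := by
  rw [← measureReal_apply _ x (h₁.prod h₂), measureReal_def]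
  change (((A.measure x ⊗ₘ κ).map Prod.swap) (E₁ ×ˢ E₂)).toReal = _
  rw [Measure.map_apply measurable_swap (h₁.prod h₂), Set.preimage_swap_prod,
    Measure.compProd_apply_prod h₂ h₁, integral_toReal (κ.measurable_coe h₁).aemeasurable
      (.of_forall fun y => measure_lt_top (κ y) E₁)]

end CompProd

end POVM

open ProbabilityTheory in
/-- For a POVM `A₂` on `Ω₂` and a regular Markov kernel `κ` from `Ω₂`
to `Ω₁`, there exists a POVM `A₁₂` on the product space with
`A₁₂(E₁ × E₂) = ∫_{E₂} κ(E₁|y) dA₂(y)`, unique on the product σ-algebra. -/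
theorem stmt7 {Ω₁ Ω₂ : Type*} [MeasurableSpace Ω₁] [MeasurableSpace Ω₂]
    (A₂ : POVM Ω₂ H) (κ : Kernel Ω₂ Ω₁) [IsMarkovKernel κ] :
    ∃ A₁₂ : POVM (Ω₁ × Ω₂) H,
      (∀ E₁ E₂, MeasurableSet E₁ → MeasurableSet E₂ → ∀ x : H,
        (⟪x, A₁₂.toFun (E₁ ×ˢ E₂) x⟫_ℂ).re = ∫ y in E₂, (κ y E₁).toReal ∂(A₂.measure x)) ∧
      ∀ B : POVM (Ω₁ × Ω₂) H,
        (∀ E₁ E₂, MeasurableSet E₁ → MeasurableSet E₂ → ∀ x : H,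
          (⟪x, B.toFun (E₁ ×ˢ E₂) x⟫_ℂ).re = ∫ y in E₂, (κ y E₁).toReal ∂(A₂.measure x)) →
        ∀ F : Set (Ω₁ × Ω₂), MeasurableSet F → B.toFun F = A₁₂.toFun F := by
  refine ⟨A₂.compProd κ, fun E₁ E₂ h₁ h₂ x => A₂.re_inner_compProd_prod κ h₁ h₂ x,
    fun B hB F hF => POVM.toFun_eq_of_isPiSystem generateFrom_prod.symm isPiSystem_prod ?_ hF⟩
  rintro _ ⟨E₁, h₁, E₂, h₂, rfl⟩ x
  rw [hB E₁ E₂ h₁ h₂ x, A₂.re_inner_compProd_prod κ h₁ h₂ x]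
end

section
/- Let A : Ω_A → L(H) be a discrete POVM (Ω_A countable with power-set σ-algebra, A(x) ≥ 0, ∑_x A(x) = I) and T : Ω_A → Ω_T a map to a measurable space whose σ-algebra contains singletons. Suppose there exist h : Ω_A → [0,∞) and g : S(H) × Ω_T → [0,∞) with tr[ρ A(x)] = h(x)·g_ρ(T(x)) for all states ρ and all x ∈ Ω_A, where ρ ↦ g_ρ(t) is affine and positive. Then there exists a positive-operator-valued function G : Ω_T → L₊(H) such that A(x) = h(x)·G(T(x)) for all x ∈ Ω_A. -/
open MeasureTheory
open scoped InnerProductSpace ENNReal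

variable {H : Type*} [NormedAddCommGroup H] [InnerProductSpace ℂ H] [CompleteSpace H]

/-!
Testing the factorization on the pure states `|e⟩⟨e|` gives
`Re ⟪e, A(x) e⟫ = h(x) g_e(T(x))` for unit vectors `e`. A self-adjoint operator is determined
by its quadratic form on the unit sphere, so `A(x) = 0` whenever `h(x) = 0`, and
`h(x') A(x) = h(x) A(x')` whenever `T(x) = T(x')`. Hence `G(t) := A(x) / h(x)` for any `x` with
`T(x) = t` and `h(x) ≠ 0` (and `G(t) := 0` if there is none) is well defined and positive.
-/

open InnerProductSpace

section QuadraticForm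

variable {𝕜 E : Type*} [RCLike 𝕜] [NormedAddCommGroup E] [InnerProductSpace 𝕜 E] [CompleteSpace E]

-- The quadratic form is 2-homogeneous, so vanishing on the unit sphere is vanishing everywhere.
theorem IsSelfAdjoint.eq_zero_of_re_inner_unit_eq_zero {S : E →L[𝕜] E}
    (hS : IsSelfAdjoint S) (h0 : ∀ e : E, ‖e‖ = 1 → RCLike.re ⟪e, S e⟫_𝕜 = 0) : S = 0 := by
  have hre : ∀ x : E, RCLike.re ⟪x, S x⟫_𝕜 = 0 := by
    intro x
    rcases eq_or_ne x 0 with rfl | hx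
    · simp
    have hunit := h0 ((‖x‖ : 𝕜)⁻¹ • x) (norm_smul_inv_norm hx)
    rw [map_smul, inner_smul_left, inner_smul_right, ← mul_assoc, RCLike.conj_inv,
      RCLike.conj_ofReal, ← RCLike.ofReal_inv, ← RCLike.ofReal_mul, RCLike.re_ofReal_mul] at hunit
    exact (mul_eq_zero.mp hunit).resolve_left (by simpa using hx)
  have hsym := hS.isSymmetric
  rw [← ContinuousLinearMap.coe_inj, ContinuousLinearMap.toLinearMap_zero,
    ← hsym.inner_map_self_eq_zero]
  intro x
  rw [← hsym.coe_re_inner_apply_self, hsym]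
  simpa using congrArg (RCLike.ofReal (K := 𝕜)) (hre x)

theorem IsSelfAdjoint.smul_eq_smul_of_re_inner_eq_mul {S S' : E →L[𝕜] E}
    (hS : IsSelfAdjoint S) (hS' : IsSelfAdjoint S') {r r' : ℝ} {c : (e : E) → ‖e‖ = 1 → ℝ}
    (h : ∀ e he, RCLike.re ⟪e, S e⟫_𝕜 = r * c e he)
    (h' : ∀ e he, RCLike.re ⟪e, S' e⟫_𝕜 = r' * c e he) :
    (r' : 𝕜) • S = (r : 𝕜) • S' := by
  rw [← sub_eq_zero]
  refine ((IsSelfAdjoint.smul (RCLike.conj_ofReal r') hS).sub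
    (IsSelfAdjoint.smul (RCLike.conj_ofReal r) hS')).eq_zero_of_re_inner_unit_eq_zero
    fun e he => ?_
  simp only [sub_apply, smul_apply, inner_sub_right,
    inner_smul_right, map_sub, RCLike.re_ofReal_mul, h e he, h' e he]
  ring

end QuadraticForm

theorem hasSum_inner_rankOne_self_comp (b : HilbertBasis ℕ ℂ H) (e : H) (S : H →L[ℂ] H) :
    HasSum (fun i => ⟪b i, (rankOne ℂ e e ∘L S) (b i)⟫_ℂ) ⟪e, S e⟫_ℂ := by
  have hsum := b.hasSum_inner_mul_inner (ContinuousLinearMap.adjoint S e) e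
  simp only [ContinuousLinearMap.adjoint_inner_left] at hsum
  refine hsum.congr_fun fun i => ?_
  simp

theorem trOp_rankOne_self_comp (b : HilbertBasis ℕ ℂ H) (e : H) (S : H →L[ℂ] H) :
    trOp b (rankOne ℂ e e ∘L S) = (⟪e, S e⟫_ℂ).re :=
  (Complex.hasSum_re (hasSum_inner_rankOne_self_comp b e S)).tsum_eq

noncomputable def QState.pure (b : HilbertBasis ℕ ℂ H) (e : H) (he : ‖e‖ = 1) : QState b where
  op := rankOne ℂ e e
  pos := isPositive_rankOne_self e
  tr_one := by
    simpa [inner_self_eq_norm_sq_to_K, he] using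
      Complex.hasSum_re (hasSum_inner_rankOne_self_comp b e 1)

theorem exists_eq_smul_comp {ι τ 𝕜 M : Type*} [Field 𝕜] [AddCommGroup M] [Module 𝕜 M]
    (P : M → Prop) (A : ι → M) (r : ι → 𝕜) (T : ι → τ) (hP_zero : P 0)
    (hP : ∀ a, r a ≠ 0 → P ((r a)⁻¹ • A a)) (hA_zero : ∀ a, r a = 0 → A a = 0)
    (hA : ∀ a a', T a = T a' → r a' • A a = r a • A a') :
    ∃ G : τ → M, (∀ t, P (G t)) ∧ ∀ a, A a = r a • G (T a) := by
  classical
  refine ⟨fun t => if hex : ∃ a, T a = t ∧ r a ≠ 0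
    then (r hex.choose)⁻¹ • A hex.choose else 0, fun t => ?_, fun a => ?_⟩
  · dsimp only
    split_ifs with hex
    exacts [hP _ hex.choose_spec.2, hP_zero]
  · by_cases ha : r a = 0
    · simp [hA_zero a ha, ha]
    have hex : ∃ a', T a' = T a ∧ r a' ≠ 0 := ⟨a, rfl, ha⟩
    obtain ⟨hT, hr⟩ := hex.choose_spec
    dsimp only
    rw [dif_pos hex, smul_smul, mul_comm, ← smul_smul, hA _ _ hT, smul_smul,
      inv_mul_cancel₀ hr, one_smul]

theorem stmt15_general {ΩA ΩT : Type*}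
    (b : HilbertBasis ℕ ℂ H)
    (A : ΩA → H →L[ℂ] H) (hpos : ∀ a, (A a).IsPositive)
    (T : ΩA → ΩT)
    (h : ΩA → ℝ) (hh : ∀ a, 0 ≤ h a)
    (g : QState b → ΩT → ℝ)
    (hfac : ∀ (ρ : QState b) (a : ΩA), trOp b (ρ.op ∘L A a) = h a * g ρ (T a)) :
    ∃ G : ΩT → H →L[ℂ] H, (∀ t, (G t).IsPositive) ∧
      ∀ a : ΩA, A a = (h a : ℂ) • G (T a) := by
  have hform (a : ΩA) (e : H) (he : ‖e‖ = 1) :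
      RCLike.re ⟪e, A a e⟫_ℂ = h a * g (QState.pure b e he) (T a) := by
    rw [← hfac, QState.pure, trOp_rankOne_self_comp, RCLike.re_to_complex]
  refine exists_eq_smul_comp ContinuousLinearMap.IsPositive A (fun a => (h a : ℂ)) T
    ContinuousLinearMap.isPositive_zero (fun a _ => ?_) (fun a ha => ?_) (fun a a' hT => ?_)
  · rw [← Complex.ofReal_inv]
    exact (hpos a).smul_of_nonneg (Complex.zero_le_real.mpr (inv_nonneg.mpr (hh a)))
  · refine (hpos a).isSelfAdjoint.eq_zero_of_re_inner_unit_eq_zero fun e he => ?_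
    rw [hform a e he, Complex.ofReal_eq_zero.mp ha, zero_mul]
  · exact (hpos a).isSelfAdjoint.smul_eq_smul_of_re_inner_eq_mul (hpos a').isSelfAdjoint
      (hform a) (hT ▸ hform a')

/-- For a discrete POVM `A` on a countable outcome set, if
`tr[ρ A(x)] = h(x) g_ρ(T(x))` for all states `ρ` with `ρ ↦ g_ρ(t)` affine and
nonnegative, then `A(x) = h(x) G(T(x))` for some positive-operator valued `G`. -/
theorem stmt15 {ΩA ΩT : Type*} [Countable ΩA] [MeasurableSpace ΩT]
    (b : HilbertBasis ℕ ℂ H)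
    (A : ΩA → H →L[ℂ] H) (hpos : ∀ a, (A a).IsPositive)
    (hcomp : ∀ x : H, HasSum (fun a => ⟪x, A a x⟫_ℂ) ⟪x, x⟫_ℂ)
    (hsing : ∀ t : ΩT, MeasurableSet {t})
    (T : ΩA → ΩT)
    (h : ΩA → ℝ) (hh : ∀ a, 0 ≤ h a)
    (g : QState b → ΩT → ℝ) (hg : ∀ ρ t, 0 ≤ g ρ t)
    (hfac : ∀ (ρ : QState b) (a : ΩA), trOp b (ρ.op ∘L A a) = h a * g ρ (T a))
    (haff : ∀ (t : ΩT) (ρ₁ ρ₂ ρ₃ : QState b) (p : ℝ), 0 ≤ p → p ≤ 1 →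
      ρ₃.op = (p : ℂ) • ρ₁.op + ((1 - p : ℝ) : ℂ) • ρ₂.op →
      g ρ₃ t = p * g ρ₁ t + (1 - p) * g ρ₂ t) :
    ∃ G : ΩT → H →L[ℂ] H, (∀ t, (G t).IsPositive) ∧
      ∀ a : ΩA, A a = (h a : ℂ) • G (T a) :=
  stmt15_general b A hpos T h hh g hfac
end

section
/- For any discrete POVM A : Ω_A → L(H), define the quotient statistic S : Ω_A → Ω_A/∼_A where x ∼_A x′ iff A(x) = c A(x′) for some c > 0 (restricting to non-vanishing effects). Then the pushforward POVM Ā := A_S is pairwise linearly independent, and there exist h : Ω_A → (0,∞) and a non-vanishing operator function G on Ω_A/∼_A with A(x) = h(x)·G(S(x)); in particular S is a sufficient statistic for A and Ā ≃ A (fuzzy equivalent). -/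
/-!
Fix a representative `s.out` of every class `s`. Each effect is a positive multiple
`A a = h a • A (S a).out`, so summing over a fiber gives `Ā s = C s • A s.out` with
`C s = ∑_{S a = s} h a > 0`. If two nonzero positive operators are proportional by a complex
scalar, the scalar is a positive real; hence `Ā s, Ā s'` are linearly dependent only when
`s = s'`. The two Markov matrices are the deterministic kernel of `S` and its reverse, which
splits `Ā s` back into the pieces `A a` with weights `h a / C s`.
-/

open MeasureTheory
open scoped InnerProductSpace ENNReal

variable {H : Type*} [NormedAddCommGroup H] [InnerProductSpace ℂ H] [CompleteSpace H]

/-- Proportionality by a positive scalar: `x ∼_A x'` iff `A x = c • A x'` for some `c > 0`. -/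
def propRel {H : Type*} [NormedAddCommGroup H] [InnerProductSpace ℂ H] [CompleteSpace H]
    {ΩA : Type*} (A : ΩA → H →L[ℂ] H) : ΩA → ΩA → Prop :=
  fun x x' => ∃ c : ℝ, 0 < c ∧ A x = (c : ℂ) • A x'

open scoped ComplexOrder

namespace ContinuousLinearMap

variable {E : Type*} [NormedAddCommGroup E] [InnerProductSpace ℂ E]

theorem ext_inner_self_complex {S T : E →L[ℂ] E} (h : ∀ v, ⟪v, S v⟫_ℂ = ⟪v, T v⟫_ℂ) : S = T :=
  coe_injective <| (ext_inner_map _ _).mp fun v =>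
    (by simpa only [inner_conj_symm] using congrArg (starRingEnd ℂ) (h v) : ⟪S v, v⟫_ℂ = ⟪T v, v⟫_ℂ)

theorem exists_inner_self_ne_zero {T : E →L[ℂ] E} (hT : T ≠ 0) : ∃ v, ⟪v, T v⟫_ℂ ≠ 0 := by
  by_contra! h
  exact hT <| ext_inner_self_complex fun v => by simpa using h v

theorem exists_hasSum_and_eq_smul_of_hasSum_inner {ι : Type*} {f : ι → ℝ} {T G : E →L[ℂ] E}
    (hG : G ≠ 0) (hT : ∀ v, HasSum (fun i => (f i : ℂ) * ⟪v, G v⟫_ℂ) ⟪v, T v⟫_ℂ) :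
    ∃ C : ℝ, HasSum f C ∧ T = (C : ℂ) • G := by
  obtain ⟨w, hw⟩ := exists_inner_self_ne_zero hG
  have hf : HasSum f (⟪w, T w⟫_ℂ / ⟪w, G w⟫_ℂ).re := by
    simpa [mul_div_cancel_right₀ _ hw] using Complex.hasSum_re ((hT w).div_const ⟪w, G w⟫_ℂ)
  refine ⟨_, hf, ext_inner_self_complex fun v => ?_⟩
  rw [smul_apply, inner_smul_right]
  exact (hT v).unique ((Complex.hasSum_ofReal.mpr hf).mul_right _)

theorem IsPositive.exists_pos_smul_of_eq_smul {S T : E →L[ℂ] E} (hS : S.IsPositive)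
    (hT : T.IsPositive) (hS0 : S ≠ 0) (hT0 : T ≠ 0) {z : ℂ} (h : S = z • T) :
    ∃ t : ℝ, 0 < t ∧ S = (t : ℂ) • T := by
  have hz : 0 ≤ z := by
    rw [← ((isPositive_toLinearMap_iff T).mpr hT).isPositive_smul_iff
      (fun h0 => hT0 (coe_injective h0)), ← toLinearMap_smul, isPositive_toLinearMap_iff, ← h]
    exact hS
  have hz0 : z ≠ 0 := by
    rintro rfl
    exact hS0 (by simpa using h)
  obtain ⟨t, ht, rfl⟩ := RCLike.pos_iff_exists_ofReal.mp (lt_of_le_of_ne hz hz0.symm)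
  exact ⟨t, ht, h⟩

end ContinuousLinearMap

theorem hasSum_fiber_iff_hasSum_ite {ι β α : Type*} [AddCommMonoid α] [TopologicalSpace α]
    [DecidableEq β] {p : ι → β} {b : β} {f : ι → α} {a : α} :
    HasSum (fun i : {i // p i = b} => f i) a ↔ HasSum (fun i => if b = p i then f i else 0) a := by
  refine (hasSum_subtype_iff_indicator (s := {i | p i = b})).trans ?_
  congr! 2 with i
  simp only [Set.indicator_apply, Set.mem_ofPred_eq, @eq_comm _ (p i)]

section propRel

variable {ι : Type*}

theorem propRel_equivalence (A : ι → H →L[ℂ] H) : Equivalence (propRel A) where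
  refl _ := ⟨1, one_pos, by simp⟩
  symm := by
    rintro _ _ ⟨c, hc, h⟩
    refine ⟨c⁻¹, inv_pos.mpr hc, ?_⟩
    rw [h, smul_smul, Complex.ofReal_inv, inv_mul_cancel₀ (by exact_mod_cast hc.ne'), one_smul]
  trans := by
    rintro _ _ _ ⟨c, hc, h⟩ ⟨d, hd, h'⟩
    exact ⟨c * d, mul_pos hc hd, by rw [h, h', smul_smul, Complex.ofReal_mul]⟩

theorem propRel_out_mk (A : ι → H →L[ℂ] H) (a : ι) : propRel A a (Quot.mk (propRel A) a).out :=
  ((propRel_equivalence A).quot_mk_eq_iff _ _).mp (Quot.out_eq _).symm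

theorem propRel_of_eq_pos_smul {B D : ι → H →L[ℂ] H} {c : ι → ℝ} (hc : ∀ i, 0 < c i)
    (hB : ∀ i, B i = (c i : ℂ) • D i) {i j : ι} (h : propRel B i j) : propRel D i j := by
  obtain ⟨t, ht, hij⟩ := h
  refine ⟨(c i)⁻¹ * t * c j, by have := hc i; have := hc j; positivity, ?_⟩
  rw [hB, hB, smul_smul, eq_comm, ← inv_smul_eq_iff₀ (by exact_mod_cast (hc i).ne')] at hij
  rw [← hij, smul_smul]
  congr 1
  push_cast
  ring

theorem linearIndependent_pair_of_not_propRel {B : ι → H →L[ℂ] H}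
    (hpos : ∀ i, (B i).IsPositive) (hnv : ∀ i, B i ≠ 0) {i j : ι} (h : ¬ propRel B j i) :
    LinearIndependent ℂ ![B i, B j] :=
  (LinearIndependent.pair_iff' (hnv i)).mpr fun _ hz =>
    h ((hpos j).exists_pos_smul_of_eq_smul (hpos i) (hnv j) (hnv i) hz.symm)

end propRel

theorem exists_pos_smul_out_of_hasSum_fiber {ΩA : Type*} (A : ΩA → H →L[ℂ] H)
    (hnv : ∀ a, A a ≠ 0) (Abar : Quot (propRel A) → H →L[ℂ] H)
    (hAbar : ∀ (s : Quot (propRel A)) (v : H),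
      HasSum (fun a : {a : ΩA // Quot.mk (propRel A) a = s} => ⟪v, A a.1 v⟫_ℂ)
        ⟪v, Abar s v⟫_ℂ) :
    ∃ (h : ΩA → ℝ) (C : Quot (propRel A) → ℝ), (∀ a, 0 < h a) ∧ (∀ s, 0 < C s) ∧
      (∀ a, A a = (h a : ℂ) • A (Quot.mk (propRel A) a).out) ∧
      (∀ s, HasSum (fun a : {a // Quot.mk (propRel A) a = s} => h a) (C s)) ∧
      ∀ s, Abar s = (C s : ℂ) • A s.out := by
  choose h hh hA using propRel_out_mk A
  have hfiber (s : Quot (propRel A)) : ∃ C : ℝ,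
      HasSum (fun a : {a // Quot.mk (propRel A) a = s} => h a) C ∧
        Abar s = (C : ℂ) • A s.out := by
    refine ContinuousLinearMap.exists_hasSum_and_eq_smul_of_hasSum_inner (hnv _) fun v => ?_
    convert hAbar s v using 2 with a
    rw [hA a, a.2, smul_apply, inner_smul_right]
  choose C hC hAbarC using hfiber
  refine ⟨h, C, hh, fun s => ?_, hA, hC, hAbarC⟩
  exact (hh _).trans_le (le_hasSum (hC s) ⟨s.out, s.out_eq⟩ fun a _ => (hh a).le)

theorem stmt17_general {ΩA : Type*}
    (A : ΩA → H →L[ℂ] H) (hpos : ∀ a, (A a).IsPositive) (hnv : ∀ a, A a ≠ 0)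
    (Abar : Quot (propRel A) → H →L[ℂ] H)
    (hAbar : ∀ (s : Quot (propRel A)) (v : H),
      HasSum (fun a : {a : ΩA // Quot.mk (propRel A) a = s} => ⟪v, A a.1 v⟫_ℂ)
        ⟪v, Abar s v⟫_ℂ) :
    (∃ (h : ΩA → ℝ) (G : Quot (propRel A) → H →L[ℂ] H), (∀ a, 0 < h a) ∧
        (∀ s, G s ≠ 0) ∧ ∀ a : ΩA, A a = (h a : ℂ) • G (Quot.mk (propRel A) a)) ∧
    (∀ s s' : Quot (propRel A), s ≠ s' → LinearIndependent ℂ ![Abar s, Abar s']) ∧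
    (∃ κ : Quot (propRel A) → ΩA → ℝ, (∀ s y, 0 ≤ κ s y) ∧
        (∀ y, HasSum (fun s => κ s y) 1) ∧
        ∀ (s : Quot (propRel A)) (v : H),
          (⟪v, Abar s v⟫_ℂ).re = ∑' y, κ s y * (⟪v, A y v⟫_ℂ).re) ∧
    (∃ κ' : ΩA → Quot (propRel A) → ℝ, (∀ y s, 0 ≤ κ' y s) ∧
        (∀ s, HasSum (fun y => κ' y s) 1) ∧
        ∀ (y : ΩA) (v : H),
          (⟪v, A y v⟫_ℂ).re = ∑' s, κ' y s * (⟪v, Abar s v⟫_ℂ).re) := by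
  classical
  obtain ⟨h, C, hh, hCpos, hA, hC, hAbarC⟩ := exists_pos_smul_out_of_hasSum_fiber A hnv Abar hAbar
  refine ⟨⟨h, fun s => A s.out, hh, fun s => hnv _, hA⟩, fun s s' hss' => ?_,
    ⟨fun s y => if s = Quot.mk (propRel A) y then 1 else 0, ?_, ?_, ?_⟩,
    ⟨fun y s => if s = Quot.mk (propRel A) y then h y / C s else 0, ?_, ?_, ?_⟩⟩
  · refine linearIndependent_pair_of_not_propRel
      (fun s => hAbarC s ▸ (hpos _).smul_of_nonneg (by exact_mod_cast (hCpos s).le))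
      (fun s => hAbarC s ▸ smul_ne_zero (by exact_mod_cast (hCpos s).ne') (hnv _))
      fun hrel => hss' ?_
    have hout : propRel A s'.out s.out := propRel_of_eq_pos_smul hCpos hAbarC hrel
    simpa only [Quot.out_eq] using (Quot.sound hout).symm
  · exact fun s y => ite_nonneg zero_le_one le_rfl
  · exact fun y => hasSum_ite_eq _ _
  · intro s v
    simp only [ite_mul, one_mul, zero_mul]
    exact ((hasSum_fiber_iff_hasSum_ite (p := Quot.mk (propRel A))
      (f := fun a => (⟪v, A a v⟫_ℂ).re)).mp (Complex.hasSum_re (hAbar s v))).tsum_eq.symm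
  · exact fun y s => ite_nonneg (div_nonneg (hh y).le (hCpos s).le) le_rfl
  · intro s
    have hsum := (hC s).div_const (C s)
    rw [div_self (hCpos s).ne'] at hsum
    exact (hasSum_fiber_iff_hasSum_ite (p := Quot.mk (propRel A)) (f := fun a => h a / C s)).mp hsum
  · intro y v
    simp only [ite_mul, zero_mul, tsum_ite_eq, hAbarC, hA y, smul_apply, inner_smul_right,
      Complex.re_ofReal_mul]
    field_simp [(hCpos _).ne']

/-- For a non-vanishing discrete POVM `A`, the quotient statistic
`S : Ω_A → Ω_A/∼_A` by positive proportionality yields a pairwise linearly independent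
pushforward POVM `Ā(s) = ∑_{S(x)=s} A(x)`; moreover `A` factorizes as
`A(x) = h(x) G(S(x))` with `h > 0` and non-vanishing `G` (so `S` is sufficient), and
`Ā` and `A` are fuzzy equivalent via Markov matrices. -/
theorem stmt17 {ΩA : Type*} [Countable ΩA]
    (A : ΩA → H →L[ℂ] H) (hpos : ∀ a, (A a).IsPositive) (hnv : ∀ a, A a ≠ 0)
    (hcomp : ∀ x : H, HasSum (fun a => ⟪x, A a x⟫_ℂ) ⟪x, x⟫_ℂ)
    (Abar : Quot (propRel A) → H →L[ℂ] H)
    (hAbar : ∀ (s : Quot (propRel A)) (v : H),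
      HasSum (fun a : {a : ΩA // Quot.mk (propRel A) a = s} => ⟪v, A a.1 v⟫_ℂ)
        ⟪v, Abar s v⟫_ℂ) :
    (∃ (h : ΩA → ℝ) (G : Quot (propRel A) → H →L[ℂ] H), (∀ a, 0 < h a) ∧
        (∀ s, G s ≠ 0) ∧ ∀ a : ΩA, A a = (h a : ℂ) • G (Quot.mk (propRel A) a)) ∧
    (∀ s s' : Quot (propRel A), s ≠ s' → LinearIndependent ℂ ![Abar s, Abar s']) ∧
    (∃ κ : Quot (propRel A) → ΩA → ℝ, (∀ s y, 0 ≤ κ s y) ∧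
        (∀ y, HasSum (fun s => κ s y) 1) ∧
        ∀ (s : Quot (propRel A)) (v : H),
          (⟪v, Abar s v⟫_ℂ).re = ∑' y, κ s y * (⟪v, A y v⟫_ℂ).re) ∧
    (∃ κ' : ΩA → Quot (propRel A) → ℝ, (∀ y s, 0 ≤ κ' y s) ∧
        (∀ s, HasSum (fun y => κ' y s) 1) ∧
        ∀ (y : ΩA) (v : H),
          (⟪v, A y v⟫_ℂ).re = ∑' s, κ' y s * (⟪v, Abar s v⟫_ℂ).re) :=
  stmt17_general A hpos hnv Abar hAbar
end
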